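/- There exists a multifunction F : [1,+∞) → c(M) into the compact subsets of the Banach space M = ℓ¹(ℕ) with V⁺(F,T) = 0 whose image ⋃_t F(t) is bounded but not totally bounded; explicitly, F(t) := {u_i : 1 ≤ i ≤ n} for n ≤ t < n+1, where u_n are the standard unit vectors of ℓ¹. Moreover V⁻(F,T) = +∞ for this F. -/

import Mathlib

/-!
`F` is increasing for inclusion, so every excess `e(F s, F t)` with `s ≤ t` vanishes and
`V⁺(F) = 0`. In the other direction, `u_{n+2} ∈ F (n + 2)` lies at distance at least `1` from
`F (n + 1)`, so along the partition `1 < 2 < ⋯` every term of `V⁻` is at least `1`. The image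
of `F` is the set of unit vectors `u_i`, `i ≥ 1`: it lies in the unit sphere, but it is an
infinite `1`-separated set, hence not totally bounded.
-/

open Set Metric EMetric Filter
open scoped ENNReal Pointwise

noncomputable def exc {M : Type*} [MetricSpace M] (X Y : Set M) : ℝ≥0∞ :=
  ⨆ x ∈ X, EMetric.infEdist x Y

noncomputable def varBy {M : Type*} [MetricSpace M]
    (D : Set M → Set M → ℝ≥0∞) (F : ℝ → Set M) (T : Set ℝ) : ℝ≥0∞ :=
  ⨆ p : {p : ℕ × (ℕ → ℝ) // Monotone p.2 ∧ ∀ i, p.2 i ∈ T},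
    ∑ i ∈ Finset.range p.1.1, D (F (p.1.2 i)) (F (p.1.2 (i + 1)))

noncomputable def varPlus {M : Type*} [MetricSpace M] (F : ℝ → Set M) (T : Set ℝ) : ℝ≥0∞ :=
  varBy exc F T

noncomputable def varMinus {M : Type*} [MetricSpace M] (F : ℝ → Set M) (T : Set ℝ) : ℝ≥0∞ :=
  varBy (fun X Y => exc Y X) F T

noncomputable def varH {M : Type*} [MetricSpace M] (F : ℝ → Set M) (T : Set ℝ) : ℝ≥0∞ :=
  varBy EMetric.hausdorffEdist F T

noncomputable def l1 : Type := lp (fun _ : ℕ => ℝ) 1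

noncomputable instance : NormedAddCommGroup l1 :=
  inferInstanceAs (NormedAddCommGroup (lp (fun _ : ℕ => ℝ) 1))

noncomputable instance : MetricSpace l1 := inferInstance

/-- The n-th standard unit vector of ℓ¹. -/
noncomputable def uvec (n : ℕ) : l1 := lp.single 1 n (1 : ℝ)

/-- The example multifunction: F(t) = {u_i : 1 ≤ i, i ≤ t}, i.e. {u_1,…,u_n} for n ≤ t < n+1. -/
noncomputable def Fex (t : ℝ) : Set l1 := uvec '' {i : ℕ | 1 ≤ i ∧ (i : ℝ) ≤ t}

section Variation

variable {M : Type*} [MetricSpace M]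

lemma exc_eq_zero_of_subset {X Y : Set M} (h : X ⊆ Y) : exc X Y = 0 := by
  simp only [exc, ENNReal.iSup_eq_zero]
  exact fun x hx => infEDist_zero_of_mem (h hx)

lemma infEDist_le_exc {X Y : Set M} {x : M} (hx : x ∈ X) : infEDist x Y ≤ exc X Y :=
  le_iSup₂ (f := fun x _ => infEDist x Y) x hx

lemma varPlus_eq_zero_of_monotoneOn {F : ℝ → Set M} {T : Set ℝ} (hF : MonotoneOn F T) :
    varPlus F T = 0 := by
  simp only [varPlus, varBy, ENNReal.iSup_eq_zero]
  rintro ⟨⟨n, p⟩, hp, hpT⟩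
  exact Finset.sum_eq_zero fun i _ =>
    exc_eq_zero_of_subset (hF (hpT i) (hpT (i + 1)) (hp i.le_succ))

lemma sum_le_varBy {D : Set M → Set M → ℝ≥0∞} {F : ℝ → Set M} {T : Set ℝ} {p : ℕ → ℝ}
    (hp : Monotone p) (hpT : ∀ i, p i ∈ T) (n : ℕ) :
    ∑ i ∈ Finset.range n, D (F (p i)) (F (p (i + 1))) ≤ varBy D F T :=
  le_iSup (fun q : {q : ℕ × (ℕ → ℝ) // Monotone q.2 ∧ ∀ i, q.2 i ∈ T} =>
      ∑ i ∈ Finset.range q.1.1, D (F (q.1.2 i)) (F (q.1.2 (i + 1))))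
    ⟨(n, p), hp, hpT⟩

lemma varBy_eq_top_of_le {D : Set M → Set M → ℝ≥0∞} {F : ℝ → Set M} {T : Set ℝ}
    {p : ℕ → ℝ} {ε : ℝ≥0∞} (hp : Monotone p) (hpT : ∀ i, p i ∈ T) (hε : ε ≠ 0)
    (hD : ∀ i, ε ≤ D (F (p i)) (F (p (i + 1)))) : varBy D F T = ⊤ := by
  by_contra hne
  obtain ⟨n, hn⟩ := ENNReal.exists_nat_mul_gt hε hne
  refine (sum_le_varBy hp hpT n).not_gt (hn.trans_le ?_)
  calc (n : ℝ≥0∞) * ε = ∑ _i ∈ Finset.range n, ε := by simp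
    _ ≤ ∑ i ∈ Finset.range n, D (F (p i)) (F (p (i + 1))) :=
      Finset.sum_le_sum fun i _ => hD i

end Variation

lemma not_totallyBounded_of_pairwise_le_dist {α : Type*} [PseudoMetricSpace α] {s : Set α}
    {ε : ℝ} (hε : 0 < ε) (hs : s.Infinite) (hsep : s.Pairwise (ε ≤ dist · ·)) :
    ¬ TotallyBounded s := by
  intro hbdd
  obtain ⟨t, -, ht, hcover⟩ := finite_approx_of_totallyBounded hbdd (ε / 2) (half_pos hε)
  have hcenter : ∀ x ∈ s, ∃ y ∈ t, x ∈ Metric.ball y (ε / 2) := fun x hx => by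
    simpa only [exists_prop] using mem_iUnion₂.1 (hcover hx)
  choose! c hct hc using hcenter
  obtain ⟨x, hx, y, hy, hxy, hcxy⟩ := hs.exists_ne_map_eq_of_mapsTo hct ht
  have hclose : dist x y < ε := calc
    dist x y ≤ dist x (c x) + dist y (c y) := by rw [hcxy]; exact dist_triangle_right _ _ _
    _ < ε / 2 + ε / 2 := add_lt_add (hc x hx) (hc y hy)
    _ = ε := add_halves ε
  exact (hsep hx hy hxy).not_gt hclose

lemma norm_uvec (n : ℕ) : ‖uvec n‖ = 1 :=
  (lp.norm_single (E := fun _ : ℕ => ℝ) one_pos n (1 : ℝ)).trans norm_one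

lemma one_le_dist_uvec {m n : ℕ} (h : m ≠ n) : 1 ≤ dist (uvec m) (uvec n) := by
  let f : lp (fun _ : ℕ => ℝ) 1 := lp.single 1 m 1 - lp.single 1 n 1
  have hfm : f m = 1 := by
    rw [lp.coeFn_sub, Pi.sub_apply, lp.single_apply_self,
      lp.single_apply_ne (E := fun _ : ℕ => ℝ) 1 n 1 h, sub_zero]
  calc (1 : ℝ) = ‖f m‖ := by rw [hfm, norm_one]
    _ ≤ ‖f‖ := lp.norm_apply_le_norm one_ne_zero f m
    _ = dist (uvec m) (uvec n) := (dist_eq_norm (uvec m) (uvec n)).symm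

lemma uvec_injective : Function.Injective uvec := fun m n h =>
  by_contra fun hmn =>
    (one_le_dist_uvec hmn).not_gt (by rw [h, dist_self]; exact one_pos)

lemma pairwise_one_le_dist_uvec (s : Set ℕ) : (uvec '' s).Pairwise (1 ≤ dist · ·) := by
  rintro _ ⟨m, -, rfl⟩ _ ⟨n, -, rfl⟩ hmn
  exact one_le_dist_uvec (ne_of_apply_ne uvec hmn)

lemma isBounded_range_uvec : Bornology.IsBounded (range uvec) :=
  isBounded_closedBall (x := 0) (r := 1) |>.subset <| range_subset_iff.2 fun n => by
    simp [norm_uvec]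

lemma uvec_mem_Fex {i : ℕ} {t : ℝ} (h1 : 1 ≤ i) (h2 : (i : ℝ) ≤ t) : uvec i ∈ Fex t :=
  ⟨i, ⟨h1, h2⟩, rfl⟩

lemma Fex_mono : Monotone Fex :=
  fun _ _ hst => image_mono fun _ hi => ⟨hi.1, hi.2.trans hst⟩

lemma Fex_finite (t : ℝ) : (Fex t).Finite :=
  ((finite_Iic ⌊t⌋₊).subset fun _ hi => Nat.le_floor hi.2).image uvec

lemma one_le_infEDist_uvec_Fex {n : ℕ} {t : ℝ} (h : t < n) :
    1 ≤ infEDist (uvec n) (Fex t) := by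
  refine le_infEDist.2 ?_
  rintro _ ⟨i, ⟨-, hi⟩, rfl⟩
  rw [edist_dist]
  exact ENNReal.one_le_ofReal.2 (one_le_dist_uvec (by rintro rfl; linarith))

lemma biUnion_Fex : ⋃ t ∈ Ici (1 : ℝ), Fex t = uvec '' Ici 1 := by
  refine Subset.antisymm (iUnion₂_subset fun t _ => image_mono fun _ hi => hi.1) ?_
  rintro _ ⟨i, hi, rfl⟩
  exact mem_biUnion (x := (i : ℝ)) (by simpa using hi) (uvec_mem_Fex hi le_rfl)

/-- On T = [1,∞), F takes nonempty compact values, V⁺(F,T) = 0, the image of F is bounded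
but not totally bounded, and V⁻(F,T) = +∞. -/
theorem example_varPlus_zero_image_not_totallyBounded :
    (∀ t ∈ Set.Ici (1 : ℝ), (Fex t).Nonempty ∧ IsCompact (Fex t)) ∧
    varPlus Fex (Set.Ici 1) = 0 ∧
    Bornology.IsBounded (⋃ t ∈ Set.Ici (1 : ℝ), Fex t) ∧
    ¬ TotallyBounded (⋃ t ∈ Set.Ici (1 : ℝ), Fex t) ∧
    varMinus Fex (Set.Ici 1) = ⊤ := by
  rw [biUnion_Fex]
  refine ⟨fun t ht => ⟨?_, (Fex_finite t).isCompact⟩,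
    varPlus_eq_zero_of_monotoneOn (Fex_mono.monotoneOn _), ?_, ?_, ?_⟩
  · exact ⟨uvec 1, uvec_mem_Fex le_rfl (by exact_mod_cast ht)⟩
  · exact isBounded_range_uvec.subset (image_subset_range _ _)
  · exact not_totallyBounded_of_pairwise_le_dist one_pos
      ((Ici_infinite 1).image uvec_injective.injOn) (pairwise_one_le_dist_uvec _)
  · refine varBy_eq_top_of_le (p := fun i => ((i + 1 : ℕ) : ℝ))
      (fun _ _ h => by simpa using h) (fun i => by simp) one_ne_zero fun i => ?_
    exact (one_le_infEDist_uvec_Fex (n := i + 2) (by push_cast; linarith)).trans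
      (infEDist_le_exc (uvec_mem_Fex (by omega) le_rfl))
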